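/- arXiv:1210.4224 — 2 statements merged into one kernel-verified Lean document; each statement's English description precedes it below -/
import Mathlib

section
/- Let ρ : [t₀,∞) → ℂ be continuous and satisfy ρ(t) = 1 + ∫_{t₀}^t b(s) ρ(s) ds + δ(t), where b : [t₀,∞) → ℂ is continuous with Re b(t) = -γ a(t)² for some γ > 0 and a(t) = t^{-1/2} (t ≥ t₀ ≥ 1), and δ : [t₀,∞) → ℂ is continuous with δ(t) → δ(∞) as t → ∞ and |δ(t) - δ(∞)| ≤ C a(t), and |b(t)| ≤ C a(t)³ + C' a(t)². Then ρ(t) - δ(t) - δ(∞)(exp(∫_{t₀}^t b(u) du) - 1) - exp(∫_{t₀}^t b(u) du) → 0 as t → ∞, and consequently ρ(t) → 0 as t → ∞ provided δ(∞) = 0. -/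
open Filter Set intervalIntegral MeasureTheory

private lemma ftc6 {f : ℝ → ℂ} (hf : Continuous f) (a t : ℝ) :
    HasDerivAt (fun x => ∫ s in a..x, f s) (f t) t :=
  intervalIntegral.integral_hasDerivAt_right (hf.intervalIntegrable _ _)
    (hf.stronglyMeasurableAtFilter _ _) hf.continuousAt

/-- Asymptotics of the solution of the linear Volterra equation
`ρ(t) = 1 + ∫_{t₀}^t b ρ ds + δ(t)` with `Re b(t) = -γ a(t)²`, `a(t) = t^{-1/2}`:
`ρ(t) - δ(t) - δinf (exp(∫ b) - 1) - exp(∫ b) → 0` as `t → ∞`, and hence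
`ρ(t) → 0` provided `δinf = 0`. -/
theorem stmt_6 (t₀ γ C C' : ℝ) (ht₀ : 1 ≤ t₀) (hγ : 0 < γ) (hC : 0 < C) (hC' : 0 < C')
    (ρ b δ : ℝ → ℂ) (δinf : ℂ)
    (hρ : ContinuousOn ρ (Ici t₀)) (hb : ContinuousOn b (Ici t₀))
    (hδc : ContinuousOn δ (Ici t₀))
    (heq : ∀ t, t₀ ≤ t → ρ t = 1 + (∫ s in t₀..t, b s * ρ s) + δ t)
    (hre : ∀ t, t₀ ≤ t → (b t).re = -γ * ((t : ℝ) ^ (-(1:ℝ)/2)) ^ 2)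
    (hδlim : Tendsto δ atTop (nhds δinf))
    (hδrate : ∀ t, t₀ ≤ t → ‖δ t - δinf‖ ≤ C * t ^ (-(1:ℝ)/2))
    (hbbd : ∀ t, t₀ ≤ t →
      ‖b t‖ ≤ C * (t ^ (-(1:ℝ)/2)) ^ 3 + C' * (t ^ (-(1:ℝ)/2)) ^ 2) :
    Tendsto (fun t => ρ t - δ t - δinf * (Complex.exp (∫ u in t₀..t, b u) - 1)
        - Complex.exp (∫ u in t₀..t, b u)) atTop (nhds 0) ∧
      (δinf = 0 → Tendsto ρ atTop (nhds 0)) := by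
  have ht₀0 : (0:ℝ) < t₀ := lt_of_lt_of_le one_pos ht₀
  -- continuous extensions
  have hmc : Continuous (fun t : ℝ => max t t₀) := continuous_id.max continuous_const
  have hmem : ∀ t : ℝ, max t t₀ ∈ Ici t₀ := fun t => Set.mem_Ici.2 (le_max_right _ _)
  set bt : ℝ → ℂ := fun t => b (max t t₀) with hbt
  set ρt : ℝ → ℂ := fun t => ρ (max t t₀) with hρt
  set δt : ℝ → ℂ := fun t => δ (max t t₀) with hδt
  have hbtc : Continuous bt := hb.comp_continuous hmc hmem
  have hρtc : Continuous ρt := hρ.comp_continuous hmc hmem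
  have hδtc : Continuous δt := hδc.comp_continuous hmc hmem
  have hbeq : ∀ t, t₀ ≤ t → bt t = b t := fun t ht => by rw [hbt]; simp [max_eq_left ht]
  have hρeq : ∀ t, t₀ ≤ t → ρt t = ρ t := fun t ht => by rw [hρt]; simp [max_eq_left ht]
  have hδeq : ∀ t, t₀ ≤ t → δt t = δ t := fun t ht => by rw [hδt]; simp [max_eq_left ht]
  -- B and its properties
  set B : ℝ → ℂ := fun t => ∫ u in t₀..t, bt u with hBdef
  have hB : ∀ t, HasDerivAt B (bt t) t := fun t => ftc6 hbtc t₀ t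
  have hBc : Continuous B := by
    have : Differentiable ℝ B := fun t => (hB t).differentiableAt
    exact this.continuous
  have hBeq : ∀ t, t₀ ≤ t → B t = ∫ u in t₀..t, b u := by
    intro t ht
    exact intervalIntegral.integral_congr fun s hs => by
      rw [uIcc_of_le ht] at hs; exact hbeq s hs.1
  have hBzero : B t₀ = 0 := intervalIntegral.integral_same
  -- G and its properties
  set G : ℝ → ℂ := fun t => ∫ s in t₀..t, bt s * ρt s with hGdef
  have hG : ∀ t, HasDerivAt G (bt t * ρt t) t := fun t => ftc6 (hbtc.mul hρtc) t₀ t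
  have hGc : Continuous G := by
    have : Differentiable ℝ G := fun t => (hG t).differentiableAt
    exact this.continuous
  have hGeq : ∀ t, t₀ ≤ t → G t = ∫ s in t₀..t, b s * ρ s := by
    intro t ht
    exact intervalIntegral.integral_congr fun s hs => by
      rw [uIcc_of_le ht] at hs; rw [hbeq s hs.1, hρeq s hs.1]
  have hρG : ∀ t, t₀ ≤ t → ρ t = 1 + G t + δ t := by
    intro t ht; rw [hGeq t ht]; exact heq t ht
  -- exp(-B) derivative
  have hExpNeg : ∀ t, HasDerivAt (fun x => Complex.exp (-B x))
      (-bt t * Complex.exp (-B t)) t := by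
    intro t
    have := ((hB t).neg).cexp
    simpa [mul_comm] using this
  have hExpNegC : Continuous (fun x => Complex.exp (-B x)) := by
    have : Differentiable ℝ (fun x => Complex.exp (-B x)) :=
      fun t => (hExpNeg t).differentiableAt
    exact this.continuous
  -- H
  set H : ℝ → ℂ := fun t => ∫ s in t₀..t, δt s * bt s * Complex.exp (-B s) with hHdef
  have hH : ∀ t, HasDerivAt H (δt t * bt t * Complex.exp (-B t)) t :=
    fun t => ftc6 ((hδtc.mul hbtc).mul hExpNegC) t₀ t
  have hHc : Continuous H := by
    have : Differentiable ℝ H := fun t => (hH t).differentiableAt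
    exact this.continuous
  -- F is constant
  set F : ℝ → ℂ := fun t => (1 + G t) * Complex.exp (-B t) - H t with hFdef
  have hFc : Continuous F := (((continuous_const.add hGc).mul hExpNegC).sub hHc)
  have hF0 : ∀ t, t₀ ≤ t → HasDerivAt F 0 t := by
    intro t ht
    have h1 : HasDerivAt (fun x => (1 + G x) * Complex.exp (-B x))
        (bt t * ρt t * Complex.exp (-B t) + (1 + G t) * (-bt t * Complex.exp (-B t))) t :=
      HasDerivAt.mul ((hG t).const_add 1) (hExpNeg t)
    have h2 := h1.sub (hH t)
    have hρval : ρt t = 1 + G t + δt t := by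
      rw [hρeq t ht, hδeq t ht]; exact hρG t ht
    refine h2.congr_deriv ?_
    rw [hρval]; ring
  have hFconst : ∀ t, t₀ ≤ t → F t = F t₀ := by
    intro t ht
    have := constant_of_has_deriv_right_zero (f := F) (a := t₀) (b := t)
      hFc.continuousOn (fun y hy => (hF0 y hy.1).hasDerivWithinAt)
    exact this t (right_mem_Icc.2 ht)
  have hFt₀ : F t₀ = 1 := by
    simp [hFdef, hGdef, hHdef, hBzero]
  -- variation of constants
  have hvoc : ∀ t, t₀ ≤ t → 1 + G t = Complex.exp (B t) * (1 + H t) := by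
    intro t ht
    have h := (hFconst t ht).trans hFt₀
    have h2 : (1 + G t) * Complex.exp (-B t) = 1 + H t := by
      rw [hFdef] at h; linear_combination h
    calc 1 + G t = (1 + G t) * (Complex.exp (-B t) * Complex.exp (B t)) := by
          rw [← Complex.exp_add]; simp
      _ = ((1 + G t) * Complex.exp (-B t)) * Complex.exp (B t) := by ring
      _ = Complex.exp (B t) * (1 + H t) := by rw [h2]; ring
  -- the key identity: ∫ bt e^{-B} = 1 - e^{-B t}
  have hJ : ∀ t, t₀ ≤ t → (∫ s in t₀..t, bt s * Complex.exp (-B s))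
      = 1 - Complex.exp (-B t) := by
    intro t ht
    have hd : ∀ s ∈ uIcc t₀ t, HasDerivAt (fun x => -Complex.exp (-B x))
        (bt s * Complex.exp (-B s)) s := by
      intro s _
      have := (hExpNeg s).neg
      rw [neg_mul, neg_neg] at this
      exact this
    have hint : IntervalIntegrable (fun s => bt s * Complex.exp (-B s)) volume t₀ t :=
      (hbtc.mul hExpNegC).intervalIntegrable _ _
    rw [intervalIntegral.integral_eq_sub_of_hasDerivAt hd hint, hBzero]
    simp only [neg_zero, Complex.exp_zero]
    ring
  -- main expression as single integral
  have hmain : ∀ t, t₀ ≤ t →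
      ρ t - δ t - δinf * (Complex.exp (∫ u in t₀..t, b u) - 1)
        - Complex.exp (∫ u in t₀..t, b u)
      = ∫ s in t₀..t, (δt s - δinf) * bt s * Complex.exp (B t - B s) := by
    intro t ht
    rw [← hBeq t ht]
    have h1 : ρ t - δ t = Complex.exp (B t) * (1 + H t) := by
      rw [hρG t ht]
      have := hvoc t ht
      linear_combination this
    have h2 : δinf * (Complex.exp (B t) - 1)
        = Complex.exp (B t) * ∫ s in t₀..t, δinf * (bt s * Complex.exp (-B s)) := by
      rw [intervalIntegral.integral_const_mul, hJ t ht]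
      have hx : Complex.exp (B t) * Complex.exp (-B t) = 1 := by
        rw [← Complex.exp_add]; simp
      linear_combination δinf * hx
    rw [h1, h2]
    have h3 : (∫ s in t₀..t, (δt s - δinf) * bt s * Complex.exp (B t - B s))
        = Complex.exp (B t) * ∫ s in t₀..t, (δt s - δinf) * (bt s * Complex.exp (-B s)) := by
      rw [← intervalIntegral.integral_const_mul]
      refine intervalIntegral.integral_congr fun s _ => ?_
      rw [Complex.exp_sub, Complex.exp_neg]
      field_simp
    rw [h3]
    have h4 : (∫ s in t₀..t, (δt s - δinf) * (bt s * Complex.exp (-B s)))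
        = (∫ s in t₀..t, δt s * bt s * Complex.exp (-B s))
          - ∫ s in t₀..t, δinf * (bt s * Complex.exp (-B s)) := by
      rw [← intervalIntegral.integral_sub]
      · exact intervalIntegral.integral_congr fun s _ => by ring
      · exact ((hδtc.mul hbtc).mul hExpNegC).intervalIntegrable _ _
      · exact (continuous_const.mul (hbtc.mul hExpNegC)).intervalIntegrable _ _
    rw [h4, hHdef]
    ring
  -- real part of B
  have hrey : ∀ u, t₀ ≤ u → (bt u).re = -γ * u⁻¹ := by
    intro u hu
    have hu0 : (0:ℝ) < u := lt_of_lt_of_le ht₀0 hu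
    rw [hbeq u hu, hre u hu]
    congr 1
    rw [← Real.rpow_natCast (u ^ (-(1:ℝ)/2)) 2, ← Real.rpow_mul hu0.le]
    norm_num
    exact (Real.rpow_neg_one u)
  have hBre : ∀ t, t₀ ≤ t → (B t).re = -γ * (Real.log t - Real.log t₀) := by
    intro t ht
    have hInt : IntervalIntegrable bt volume t₀ t := hbtc.intervalIntegrable _ _
    have h1 : (B t).re = ∫ u in t₀..t, (bt u).re := by
      have := Complex.reCLM.intervalIntegral_comp_comm hInt
      simpa using this.symm
    rw [h1]
    have h2 : (∫ u in t₀..t, (bt u).re) = ∫ u in t₀..t, -γ * u⁻¹ := by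
      refine intervalIntegral.integral_congr fun u hu => ?_
      rw [uIcc_of_le ht] at hu
      exact hrey u hu.1
    have h0m : (0:ℝ) ∉ uIcc t₀ t := by
      rw [uIcc_of_le ht]; rintro ⟨h1', -⟩; linarith
    rw [h2, intervalIntegral.integral_const_mul, integral_inv h0m,
      Real.log_div (lt_of_lt_of_le ht₀0 ht).ne' ht₀0.ne']
  -- norm of exp(B t - B s)
  have hExpNorm : ∀ s t, t₀ ≤ s → s ≤ t →
      ‖Complex.exp (B t - B s)‖ = (s / t) ^ γ := by
    intro s t hs hst
    have hs0 : (0:ℝ) < s := lt_of_lt_of_le ht₀0 hs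
    have ht0 : (0:ℝ) < t := lt_of_lt_of_le hs0 hst
    rw [Complex.norm_exp]
    rw [Complex.sub_re, hBre t (hs.trans hst), hBre s hs]
    rw [Real.rpow_def_of_pos (div_pos hs0 ht0), Real.log_div hs0.ne' ht0.ne']
    ring_nf
  -- the exponent
  set γ' : ℝ := min γ (1/4) with hγ'def
  have hγ'0 : 0 < γ' := lt_min hγ (by norm_num)
  have hγ'γ : γ' ≤ γ := min_le_left _ _
  have hγ'q : γ' ≤ 1/4 := min_le_right _ _
  -- pointwise bound on the integrand
  have hptbd : ∀ t, t₀ ≤ t → ∀ s ∈ Icc t₀ t,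
      ‖(δt s - δinf) * bt s * Complex.exp (B t - B s)‖
        ≤ (C^2 * s ^ (γ' - 2) + C * C' * s ^ (γ' - 3/2)) * t ^ (-γ') := by
    intro t ht s hs
    have hs0 : (0:ℝ) < s := lt_of_lt_of_le ht₀0 hs.1
    have ht0 : (0:ℝ) < t := lt_of_lt_of_le ht₀0 ht
    rw [norm_mul, norm_mul, hExpNorm s t hs.1 hs.2]
    have e1 : ‖δt s - δinf‖ ≤ C * s ^ (-(1:ℝ)/2) := by
      rw [hδeq s hs.1]; exact hδrate s hs.1
    have e2 : ‖bt s‖ ≤ C * (s ^ (-(1:ℝ)/2)) ^ 3 + C' * (s ^ (-(1:ℝ)/2)) ^ 2 := by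
      rw [hbeq s hs.1]; exact hbbd s hs.1
    have e3 : (s / t) ^ γ ≤ (s / t) ^ γ' :=
      Real.rpow_le_rpow_of_exponent_ge (div_pos hs0 ht0)
        (div_le_one_of_le₀ hs.2 ht0.le) hγ'γ
    have e4 : (0:ℝ) ≤ (s/t) ^ γ := Real.rpow_nonneg (div_pos hs0 ht0).le _
    calc ‖δt s - δinf‖ * ‖bt s‖ * (s / t) ^ γ
        ≤ (C * s ^ (-(1:ℝ)/2)) * ((C * (s ^ (-(1:ℝ)/2)) ^ 3
            + C' * (s ^ (-(1:ℝ)/2)) ^ 2)) * ((s / t) ^ γ') := by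
          apply mul_le_mul
          · exact mul_le_mul e1 e2 (norm_nonneg _) (by positivity)
          · exact e3
          · exact e4
          · positivity
      _ = (C^2 * s ^ (γ' - 2) + C * C' * s ^ (γ' - 3/2)) * t ^ (-γ') := by
          rw [Real.div_rpow hs0.le ht0.le, ← Real.rpow_natCast (s ^ (-(1:ℝ)/2)) 3,
            ← Real.rpow_natCast (s ^ (-(1:ℝ)/2)) 2, ← Real.rpow_mul hs0.le,
            ← Real.rpow_mul hs0.le, Real.rpow_neg ht0.le]
          have e5 : γ' - 2 = (-(1:ℝ)/2) + ((-(1:ℝ)/2) * ((3:ℕ):ℝ) + γ') := by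
            push_cast; ring
          have e6 : γ' - 3/2 = (-(1:ℝ)/2) + ((-(1:ℝ)/2) * ((2:ℕ):ℝ) + γ') := by
            push_cast; ring
          rw [e5, e6, Real.rpow_add hs0, Real.rpow_add hs0, Real.rpow_add hs0,
            Real.rpow_add hs0]
          ring
  -- the constant K
  set K : ℝ := C^2 * (t₀ ^ (γ' - 1) / (1 - γ')) + C * C' * (t₀ ^ (γ' - 1/2) / (1/2 - γ'))
    with hKdef
  -- norm bound on the main expression
  have hΦbd : ∀ t, t₀ ≤ t →
      ‖∫ s in t₀..t, (δt s - δinf) * bt s * Complex.exp (B t - B s)‖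
        ≤ K * t ^ (-γ') := by
    intro t ht
    have ht0 : (0:ℝ) < t := lt_of_lt_of_le ht₀0 ht
    have hIccpos : ∀ s ∈ uIcc t₀ t, (0:ℝ) < s := by
      intro s hs; rw [uIcc_of_le ht] at hs; exact lt_of_lt_of_le ht₀0 hs.1
    have hcontbd : ContinuousOn
        (fun s => (C^2 * s ^ (γ' - 2) + C * C' * s ^ (γ' - 3/2)) * t ^ (-γ'))
        (uIcc t₀ t) := by
      apply ContinuousOn.mul _ continuousOn_const
      apply ContinuousOn.add
      · exact continuousOn_const.mul (fun s hs =>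
          (Real.continuousAt_rpow_const s _ (Or.inl (hIccpos s hs).ne')).continuousWithinAt)
      · exact continuousOn_const.mul (fun s hs =>
          (Real.continuousAt_rpow_const s _ (Or.inl (hIccpos s hs).ne')).continuousWithinAt)
    have hintbd : IntervalIntegrable
        (fun s => (C^2 * s ^ (γ' - 2) + C * C' * s ^ (γ' - 3/2)) * t ^ (-γ'))
        volume t₀ t := hcontbd.intervalIntegrable
    have hcontf : Continuous (fun s => (δt s - δinf) * bt s * Complex.exp (B t - B s)) := by
      apply Continuous.mul (((hδtc.sub continuous_const).mul hbtc))
      exact Complex.continuous_exp.comp (continuous_const.sub hBc)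
    have step1 : ‖∫ s in t₀..t, (δt s - δinf) * bt s * Complex.exp (B t - B s)‖
        ≤ ∫ s in t₀..t, ‖(δt s - δinf) * bt s * Complex.exp (B t - B s)‖ :=
      intervalIntegral.norm_integral_le_integral_norm ht
    have step2 : (∫ s in t₀..t, ‖(δt s - δinf) * bt s * Complex.exp (B t - B s)‖)
        ≤ ∫ s in t₀..t, (C^2 * s ^ (γ' - 2) + C * C' * s ^ (γ' - 3/2)) * t ^ (-γ') := by
      apply intervalIntegral.integral_mono_on ht
        (hcontf.norm.intervalIntegrable _ _) hintbd
      exact hptbd t ht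
    have h0m : (0:ℝ) ∉ uIcc t₀ t := by
      rw [uIcc_of_le ht]; rintro ⟨h1', -⟩; linarith
    have hne1 : γ' - 2 ≠ -1 := fun h => by linarith
    have hne2 : γ' - 3/2 ≠ -1 := fun h => by linarith
    have hI1 : (∫ s in t₀..t, s ^ (γ' - 2)) = (t ^ (γ' - 1) - t₀ ^ (γ' - 1)) / (γ' - 1) := by
      rw [integral_rpow (Or.inr ⟨hne1, h0m⟩), show γ' - 2 + 1 = γ' - 1 from by ring]
    have hI2 : (∫ s in t₀..t, s ^ (γ' - 3/2))
        = (t ^ (γ' - 1/2) - t₀ ^ (γ' - 1/2)) / (γ' - 1/2) := by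
      rw [integral_rpow (Or.inr ⟨hne2, h0m⟩), show γ' - 3/2 + 1 = γ' - 1/2 from by ring]
    have hb1 : (t ^ (γ' - 1) - t₀ ^ (γ' - 1)) / (γ' - 1) ≤ t₀ ^ (γ' - 1) / (1 - γ') := by
      have hq : (t ^ (γ' - 1) - t₀ ^ (γ' - 1)) / (γ' - 1)
          = (t₀ ^ (γ' - 1) - t ^ (γ' - 1)) / (1 - γ') := by
        rw [show (1:ℝ) - γ' = -(γ' - 1) by ring, div_neg, ← neg_div, neg_sub]
      rw [hq]
      gcongr
      · linarith
      · exact sub_le_self _ (Real.rpow_nonneg ht0.le _)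
    have hb2 : (t ^ (γ' - 1/2) - t₀ ^ (γ' - 1/2)) / (γ' - 1/2)
        ≤ t₀ ^ (γ' - 1/2) / (1/2 - γ') := by
      have hq : (t ^ (γ' - 1/2) - t₀ ^ (γ' - 1/2)) / (γ' - 1/2)
          = (t₀ ^ (γ' - 1/2) - t ^ (γ' - 1/2)) / (1/2 - γ') := by
        rw [show (1:ℝ)/2 - γ' = -(γ' - 1/2) by ring, div_neg, ← neg_div, neg_sub]
      rw [hq]
      gcongr
      · linarith
      · exact sub_le_self _ (Real.rpow_nonneg ht0.le _)
    have step3 : (∫ s in t₀..t, (C^2 * s ^ (γ' - 2) + C * C' * s ^ (γ' - 3/2)) * t ^ (-γ'))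
        ≤ K * t ^ (-γ') := by
      rw [intervalIntegral.integral_mul_const]
      apply mul_le_mul_of_nonneg_right _ (Real.rpow_nonneg ht0.le _)
      have hii1 : IntervalIntegrable (fun s : ℝ => s ^ (γ' - 2)) volume t₀ t := by
        apply ContinuousOn.intervalIntegrable
        exact fun s hs =>
          (Real.continuousAt_rpow_const s _ (Or.inl (hIccpos s hs).ne')).continuousWithinAt
      have hii2 : IntervalIntegrable (fun s : ℝ => s ^ (γ' - 3/2)) volume t₀ t := by
        apply ContinuousOn.intervalIntegrable
        exact fun s hs =>
          (Real.continuousAt_rpow_const s _ (Or.inl (hIccpos s hs).ne')).continuousWithinAt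
      rw [intervalIntegral.integral_add ((hii1.const_mul _)) ((hii2.const_mul _)),
        intervalIntegral.integral_const_mul, intervalIntegral.integral_const_mul,
        hI1, hI2, hKdef]
      have hm1 := mul_le_mul_of_nonneg_left hb1 (le_of_lt (by positivity : (0:ℝ) < C^2))
      have hm2 := mul_le_mul_of_nonneg_left hb2 (le_of_lt (by positivity : (0:ℝ) < C * C'))
      linarith
    exact le_trans step1 (le_trans step2 step3)
  -- limit of the bound
  have hKlim : Tendsto (fun t : ℝ => K * t ^ (-γ')) atTop (nhds 0) := by
    simpa using (tendsto_rpow_neg_atTop hγ'0).const_mul K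
  -- part 1
  have part1 : Tendsto (fun t => ρ t - δ t - δinf * (Complex.exp (∫ u in t₀..t, b u) - 1)
      - Complex.exp (∫ u in t₀..t, b u)) atTop (nhds 0) := by
    apply squeeze_zero_norm' _ hKlim
    filter_upwards [eventually_ge_atTop t₀] with t ht
    rw [hmain t ht]
    exact hΦbd t ht
  refine ⟨part1, fun h0 => ?_⟩
  -- part 2
  have hE : Tendsto (fun t => Complex.exp (∫ u in t₀..t, b u)) atTop (nhds 0) := by
    apply squeeze_zero_norm' _ (show Tendsto (fun t : ℝ => t₀ ^ γ * t ^ (-γ)) atTop (nhds 0)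
      by simpa using (tendsto_rpow_neg_atTop hγ).const_mul (t₀ ^ γ))
    filter_upwards [eventually_ge_atTop t₀] with t ht
    have ht0 : (0:ℝ) < t := lt_of_lt_of_le ht₀0 ht
    rw [← hBeq t ht, Complex.norm_exp, hBre t ht]
    rw [Real.rpow_def_of_pos ht₀0, Real.rpow_def_of_pos ht0, ← Real.exp_add]
    apply le_of_eq
    congr 1
    ring
  have hδ0 : Tendsto δ atTop (nhds 0) := by rw [← h0]; exact hδlim
  have hE1 : Tendsto (fun t => δinf * (Complex.exp (∫ u in t₀..t, b u) - 1))
      atTop (nhds 0) := by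
    rw [h0]
    simpa using tendsto_const_nhds (α := ℝ) (f := atTop) (a := (0:ℂ))
  have hsum := ((part1.add hδ0).add hE1).add hE
  rw [show (0:ℂ) + 0 + 0 + 0 = 0 by ring] at hsum
  apply hsum.congr
  intro t
  ring
end

section
/- Let p > 1 with (p-1)D²/2 < 1, and suppose f : [0,T] → [0,∞) is continuous and satisfies f(t) ≤ A t^p + (p(p-1)D²/2) ∫₀^t f(s) s^{-1} ds for all t ∈ (0,T], together with the a priori bound f(t) ≤ C t^{β} near 0 for some β > (p/2)(p-1)D². Then f(t) ≤ A t^p / (1 - (p-1)D²/2) for all t ∈ [0,T]. -/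
/-!
Put `F(t) = ∫₀ᵗ f(s)/s ds`, `κ = (p-1)D²/2` and `K = pκ < p`. The hypothesis says
`t F'(t) ≤ A tᵖ + K F(t)`, so with the integrating factor `t^{-K}` the function
`F(t) t^{-K} - A/(p-K) t^{p-K}` is antitone on `(0,T]`. The a priori bound gives
`F(t) ≤ (C/β) t^β` with `β > K`, so this function tends to `0` at `0⁺` and is therefore
nonpositive: `F(t) ≤ A tᵖ/(p-K)`. Substituting back, `f(t) ≤ A tᵖ (1 + K/(p-K)) = A tᵖ/(1-κ)`;
at `t = 0` continuity and the a priori bound force `f(0) ≤ 0`.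
-/

open Set intervalIntegral MeasureTheory Filter Topology

lemma tendsto_const_mul_rpow_nhdsGT_zero {γ : ℝ} (c : ℝ) (hγ : 0 < γ) :
    Tendsto (fun t : ℝ => c * t ^ γ) (𝓝[>] 0) (𝓝 0) := by
  have h := ((Real.continuousAt_rpow_const 0 γ (Or.inr hγ.le)).const_mul c).tendsto
  rw [Real.zero_rpow hγ.ne', mul_zero] at h
  exact h.mono_left nhdsWithin_le_nhds

lemma nonpos_of_le_const_mul_rpow {f : ℝ → ℝ} {c γ t₁ : ℝ} (hγ : 0 < γ) (ht₁ : 0 < t₁)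
    (hf : ContinuousWithinAt f (Ioi 0) 0) (hle : ∀ t ∈ Ioc 0 t₁, f t ≤ c * t ^ γ) :
    f 0 ≤ 0 := by
  refine le_of_tendsto_of_tendsto hf (tendsto_const_mul_rpow_nhdsGT_zero c hγ) ?_
  filter_upwards [Ioc_mem_nhdsGT ht₁] using hle

lemma tendsto_mul_rpow_neg_of_le_const_mul_rpow {F : ℝ → ℝ} {c β K t₁ : ℝ} (hK : K < β)
    (ht₁ : 0 < t₁) (h₀ : ∀ t ∈ Ioc 0 t₁, 0 ≤ F t) (hle : ∀ t ∈ Ioc 0 t₁, F t ≤ c * t ^ β) :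
    Tendsto (fun t => F t * t ^ (-K)) (𝓝[>] 0) (𝓝 0) := by
  refine tendsto_of_tendsto_of_tendsto_of_le_of_le' tendsto_const_nhds
    (tendsto_const_mul_rpow_nhdsGT_zero c (sub_pos.2 hK)) ?_ ?_ <;>
    filter_upwards [Ioc_mem_nhdsGT ht₁] with t ht
  · exact mul_nonneg (h₀ t ht) (Real.rpow_nonneg ht.1.le _)
  · calc F t * t ^ (-K) ≤ c * t ^ β * t ^ (-K) :=
          mul_le_mul_of_nonneg_right (hle t ht) (Real.rpow_nonneg ht.1.le _)
      _ = c * t ^ (β - K) := by rw [mul_assoc, ← Real.rpow_add ht.1, sub_eq_add_neg]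

lemma intervalIntegrable_of_le_const_mul_rpow {g : ℝ → ℝ} {T t₁ c γ : ℝ} (hγ : -1 < γ)
    (ht₁ : t₁ ∈ Ioc 0 T) (hg : ContinuousOn g (Ioc 0 T))
    (hg₀ : ∀ s ∈ Ioc 0 t₁, 0 ≤ g s) (hle : ∀ s ∈ Ioc 0 t₁, g s ≤ c * s ^ γ) :
    IntervalIntegrable g volume 0 T := by
  rw [intervalIntegrable_iff_integrableOn_Ioc_of_le (ht₁.1.le.trans ht₁.2),
    ← Ioc_union_Ioc_eq_Ioc ht₁.1.le ht₁.2]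
  refine IntegrableOn.union ?_ ?_
  · refine ((intervalIntegrable_rpow' hγ).const_mul c).1.mono'
      ((hg.mono (Ioc_subset_Ioc_right ht₁.2)).aestronglyMeasurable measurableSet_Ioc) ?_
    filter_upwards [ae_restrict_mem measurableSet_Ioc] with s hs
    rw [Real.norm_of_nonneg (hg₀ s hs)]
    exact hle s hs
  · have hsub : Icc t₁ T ⊆ Ioc 0 T := fun s hs => ⟨ht₁.1.trans_le hs.1, hs.2⟩
    exact ((hg.mono hsub).integrableOn_compact isCompact_Icc).mono_set Ioc_subset_Icc_self

lemma integral_le_const_mul_rpow {g : ℝ → ℝ} {t c γ : ℝ} (hγ : -1 < γ) (ht : 0 ≤ t)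
    (hg : IntervalIntegrable g volume 0 t) (hle : ∀ s ∈ Ioo 0 t, g s ≤ c * s ^ γ) :
    ∫ s in 0..t, g s ≤ c / (γ + 1) * t ^ (γ + 1) := by
  calc ∫ s in 0..t, g s ≤ ∫ s in 0..t, c * s ^ γ :=
        integral_mono_on_of_le_Ioo ht hg ((intervalIntegrable_rpow' hγ).const_mul c) hle
    _ = c / (γ + 1) * t ^ (γ + 1) := by
      rw [intervalIntegral.integral_const_mul, integral_rpow (Or.inl hγ),
        Real.zero_rpow (by linarith)]
      ring

lemma antitoneOn_mul_rpow_neg_sub {F F' : ℝ → ℝ} {A K p T : ℝ} (hKp : K < p)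
    (hF : ContinuousOn F (Ioc 0 T)) (hF' : ∀ t ∈ Ioo 0 T, HasDerivAt F (F' t) t)
    (hle : ∀ t ∈ Ioo 0 T, t * F' t ≤ A * t ^ p + K * F t) :
    AntitoneOn (fun t => F t * t ^ (-K) - A / (p - K) * t ^ (p - K)) (Ioc 0 T) := by
  refine antitoneOn_of_hasDerivWithinAt_nonpos (convex_Ioc 0 T)
    (f' := fun t => t ^ (-K - 1) * (t * F' t - K * F t - A * t ^ p)) ?_ ?_ ?_
  · have hrpow (r : ℝ) : ContinuousOn (fun t : ℝ => t ^ r) (Ioc 0 T) :=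
      continuousOn_id.rpow_const fun t ht => Or.inl ht.1.ne'
    exact (hF.mul (hrpow _)).sub (continuousOn_const.mul (hrpow _))
  · rw [interior_Ioc]
    intro t ht
    have ht₀ : 0 < t := ht.1
    have e₁ : t ^ (-K) = t ^ (-K - 1) * t := by rw [← Real.rpow_add_one ht₀.ne', sub_add_cancel]
    have e₂ : t ^ (p - K - 1) = t ^ (-K - 1) * t ^ p := by
      rw [← Real.rpow_add ht₀]; ring_nf
    refine HasDerivAt.hasDerivWithinAt <| HasDerivAt.congr_deriv
      (((hF' t ht).mul (Real.hasDerivAt_rpow_const (p := -K) (Or.inl ht₀.ne'))).sub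
      ((Real.hasDerivAt_rpow_const (p := p - K) (Or.inl ht₀.ne')).const_mul (A / (p - K)))) ?_
    rw [e₁, e₂]
    field_simp [(sub_pos.2 hKp).ne']
    ring
  · rw [interior_Ioc]
    intro t ht
    exact mul_nonpos_of_nonneg_of_nonpos (Real.rpow_nonneg ht.1.le _) (by linarith [hle t ht])

lemma le_div_mul_rpow_of_mul_deriv_le {F F' : ℝ → ℝ} {A K p T : ℝ} (hKp : K < p)
    (hF : ContinuousOn F (Ioc 0 T)) (hF' : ∀ t ∈ Ioo 0 T, HasDerivAt F (F' t) t)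
    (hle : ∀ t ∈ Ioo 0 T, t * F' t ≤ A * t ^ p + K * F t)
    (hlim : Tendsto (fun t => F t * t ^ (-K)) (𝓝[>] 0) (𝓝 0)) :
    ∀ t ∈ Ioc 0 T, F t ≤ A / (p - K) * t ^ p := by
  intro t ht
  have hG : Tendsto (fun s => F s * s ^ (-K) - A / (p - K) * s ^ (p - K)) (𝓝[>] 0) (𝓝 0) := by
    simpa using hlim.sub (tendsto_const_mul_rpow_nhdsGT_zero (A / (p - K)) (sub_pos.2 hKp))
  have hGt : F t * t ^ (-K) - A / (p - K) * t ^ (p - K) ≤ 0 := by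
    refine ge_of_tendsto hG ?_
    filter_upwards [Ioc_mem_nhdsGT ht.1] with s hs
    exact antitoneOn_mul_rpow_neg_sub hKp hF hF' hle ⟨hs.1, hs.2.trans ht.2⟩ ht hs.2
  rw [Real.rpow_neg ht.1.le, Real.rpow_sub ht.1, ← div_eq_mul_inv, mul_div_assoc', sub_nonpos,
    div_le_div_iff_of_pos_right (Real.rpow_pos_of_pos ht.1 K)] at hGt
  exact hGt

theorem integral_le_of_singular_gronwall {g : ℝ → ℝ} {A K p T : ℝ} (hKp : K < p)
    (hg : IntervalIntegrable g volume 0 T) (hgc : ContinuousOn g (Ioo 0 T))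
    (hle : ∀ t ∈ Ioo 0 T, t * g t ≤ A * t ^ p + K * ∫ s in 0..t, g s)
    (hlim : Tendsto (fun t => (∫ s in 0..t, g s) * t ^ (-K)) (𝓝[>] 0) (𝓝 0)) :
    ∀ t ∈ Ioc 0 T, ∫ s in 0..t, g s ≤ A / (p - K) * t ^ p := by
  refine le_div_mul_rpow_of_mul_deriv_le hKp ?_ (fun t ht => ?_) hle hlim
  · exact (continuousOn_primitive_interval' hg left_mem_uIcc).mono
      (Ioc_subset_Icc_self.trans Icc_subset_uIcc)
  · exact integral_hasDerivAt_right
      (hg.mono_set (uIcc_subset_uIcc_left (Icc_subset_uIcc (Ioo_subset_Icc_self ht))))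
      (hgc.stronglyMeasurableAtFilter isOpen_Ioo t ht) (hgc.continuousAt (isOpen_Ioo.mem_nhds ht))

theorem integral_div_le_of_le_integral_div {f : ℝ → ℝ} {A C K p T t₁ β : ℝ} (hKp : K < p)
    (hβ₀ : 0 < β) (hKβ : K < β) (ht₁ : t₁ ∈ Ioc 0 T)
    (hf_cont : ContinuousOn f (Icc 0 T)) (hf_nonneg : ∀ t ∈ Icc 0 T, 0 ≤ f t)
    (hineq : ∀ t ∈ Ioc 0 T, f t ≤ A * t ^ p + K * ∫ s in 0..t, f s / s)
    (hf_small : ∀ t ∈ Ioc 0 t₁, f t ≤ C * t ^ β) :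
    ∀ t ∈ Ioc 0 T, ∫ s in 0..t, f s / s ≤ A / (p - K) * t ^ p := by
  have hg₀ : ∀ s ∈ Icc 0 T, 0 ≤ f s / s := fun s hs => div_nonneg (hf_nonneg s hs) hs.1
  have hgc : ContinuousOn (fun s => f s / s) (Ioc 0 T) :=
    (hf_cont.mono Ioc_subset_Icc_self).div continuousOn_id fun s hs => hs.1.ne'
  have hg_small : ∀ s ∈ Ioc 0 t₁, f s / s ≤ C * s ^ (β - 1) := fun s hs => by
    rw [Real.rpow_sub_one hs.1.ne', mul_div_assoc']
    exact div_le_div_of_nonneg_right (hf_small s hs) hs.1.le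
  have hg_int := intervalIntegrable_of_le_const_mul_rpow (by linarith) ht₁ hgc
    (fun s hs => hg₀ s ⟨hs.1.le, hs.2.trans ht₁.2⟩) hg_small
  have hF₀ : ∀ t ∈ Ioc 0 t₁, 0 ≤ ∫ s in 0..t, f s / s := fun t ht =>
    integral_nonneg ht.1.le fun s hs => hg₀ s ⟨hs.1, hs.2.trans (ht.2.trans ht₁.2)⟩
  have hF_small : ∀ t ∈ Ioc 0 t₁, ∫ s in 0..t, f s / s ≤ C / β * t ^ β := fun t ht => by
    have := integral_le_const_mul_rpow (by linarith) ht.1.le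
      (hg_int.mono_set (uIcc_subset_uIcc_left (Icc_subset_uIcc ⟨ht.1.le, ht.2.trans ht₁.2⟩)))
      fun s hs => hg_small s ⟨hs.1, hs.2.le.trans ht.2⟩
    rwa [sub_add_cancel] at this
  refine integral_le_of_singular_gronwall hKp hg_int (hgc.mono Ioo_subset_Ioc_self)
    (fun t ht => ?_) (tendsto_mul_rpow_neg_of_le_const_mul_rpow hKβ ht₁.1 hF₀ hF_small)
  rw [mul_div_cancel₀ _ ht.1.ne']
  exact hineq t (Ioo_subset_Ioc_self ht)

theorem stmt_16_general (p D A C T β : ℝ)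
    (hp : 1 < p)
    (hpD : (p - 1) * D ^ 2 / 2 < 1)
    (hβ : (p / 2) * (p - 1) * D ^ 2 < β)
    (f : ℝ → ℝ)
    (hf_cont : ContinuousOn f (Icc 0 T))
    (hf_nonneg : ∀ t ∈ Icc (0:ℝ) T, 0 ≤ f t)
    (hineq : ∀ t ∈ Ioc (0:ℝ) T,
      f t ≤ A * t ^ p + (p * (p - 1) * D ^ 2 / 2) * ∫ s in (0:ℝ)..t, f s / s)
    (hnear : ∃ t₁ ∈ Ioc (0:ℝ) T, ∀ t ∈ Ioc (0:ℝ) t₁, f t ≤ C * t ^ β) :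
    ∀ t ∈ Icc (0:ℝ) T, f t ≤ A * t ^ p / (1 - (p - 1) * D ^ 2 / 2) := by
  obtain ⟨t₁, ht₁, hf_small⟩ := hnear
  set κ := (p - 1) * D ^ 2 / 2
  have hK : p * (p - 1) * D ^ 2 / 2 = p * κ := by ring
  rw [hK] at hineq
  have hκ : 0 ≤ κ := div_nonneg (mul_nonneg (by linarith) (sq_nonneg D)) zero_le_two
  have hβκ : p * κ < β := by linarith
  have hβ₀ : 0 < β := (mul_nonneg (by linarith) hκ).trans_lt hβκ
  have hF := integral_div_le_of_le_integral_div (by nlinarith) hβ₀ hβκ ht₁ hf_cont hf_nonneg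
    hineq hf_small
  intro t ht
  rcases ht.1.eq_or_lt with rfl | ht₀
  · rw [Real.zero_rpow (by linarith), mul_zero, zero_div]
    exact nonpos_of_le_const_mul_rpow hβ₀ ht₁.1
      ((hf_cont 0 ht).mono_of_mem_nhdsWithin (Icc_mem_nhdsGT (ht₁.1.trans_le ht₁.2))) hf_small
  · have hκ₁ : 1 - κ ≠ 0 := by linarith
    have hp₀ : p ≠ 0 := by linarith
    calc f t ≤ A * t ^ p + p * κ * ∫ s in 0..t, f s / s := hineq t ⟨ht₀, ht.2⟩
      _ ≤ A * t ^ p + p * κ * (A / (p - p * κ) * t ^ p) := by gcongr; exact hF t ⟨ht₀, ht.2⟩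
      _ = A * t ^ p / (1 - κ) := by field_simp; ring

/-- Singular Grönwall inequality with kernel `1/s`: if `f : [0,T] → [0,∞)` is
continuous, satisfies `f(t) ≤ A t^p + (p(p-1)D²/2) ∫₀ᵗ f(s)/s ds` on `(0,T]`, and
is a priori bounded by `C t^β` near `0` with `β > (p/2)(p-1)D²`, then
`f(t) ≤ A t^p / (1 - (p-1)D²/2)` on `[0,T]`, provided `(p-1)D²/2 < 1`. -/
theorem stmt_16 (p D A C T β : ℝ)
    (hp : 1 < p) (hD : 0 < D) (hA : 0 < A) (hC : 0 < C) (hT : 0 < T)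
    (hpD : (p - 1) * D ^ 2 / 2 < 1)
    (hβ : (p / 2) * (p - 1) * D ^ 2 < β)
    (f : ℝ → ℝ)
    (hf_cont : ContinuousOn f (Icc 0 T))
    (hf_nonneg : ∀ t ∈ Icc (0:ℝ) T, 0 ≤ f t)
    (hineq : ∀ t ∈ Ioc (0:ℝ) T,
      f t ≤ A * t ^ p + (p * (p - 1) * D ^ 2 / 2) * ∫ s in (0:ℝ)..t, f s / s)
    (hnear : ∃ t₁ ∈ Ioc (0:ℝ) T, ∀ t ∈ Ioc (0:ℝ) t₁, f t ≤ C * t ^ β) :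
    ∀ t ∈ Icc (0:ℝ) T, f t ≤ A * t ^ p / (1 - (p - 1) * D ^ 2 / 2) :=
  stmt_16_general p D A C T β hp hpD hβ f hf_cont hf_nonneg hineq hnear
end
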